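/- Let R = k[[X,Y]]/(XY(X+Y)) with k = Z/2Z and m = (x, y) the maximal ideal. Then no element a ∈ R is an almost reduction of m, i.e., there is no a with a^ℓ ∈ m^ℓ and m^{ℓ+1} = a·m^ℓ for some ℓ ≥ 0. -/

import Mathlib

/-!
Each branch `x = 0`, `y = 0`, `x = y` of the curve is a line `t ↦ t • c`, and restricting to it
gives a map `R → k[[T]]` sending `m` onto `(T)`. Applying it to `m ^ (ℓ + 1) = a • m ^ ℓ` shows that
`a` maps to an associate of `T`, i.e. the linear part `αX + βY` of `a` does not vanish at `c`.
Over `ℤ/2ℤ` these three `c` are all the nonzero vectors, so no linear form survives this test.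
-/

/-- `J` is an *almost reduction* of `I`. -/
def IsAlmostReduction {R : Type*} [CommRing R] (J I : Ideal R) : Prop :=
  ∃ ℓ : ℕ, J ^ ℓ ≤ I ^ ℓ ∧ I ^ (ℓ + 1) = J * I ^ ℓ

noncomputable section

/-- The formal power series ring `k[[X,Y]]` over `k = ℤ/2ℤ`. -/
abbrev S : Type := MvPowerSeries (Fin 2) (ZMod 2)

/-- The principal ideal `(XY(X+Y))` of `k[[X,Y]]`. -/
def 𝔟 : Ideal S :=
  Ideal.span {MvPowerSeries.X 0 * MvPowerSeries.X 1 *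
    (MvPowerSeries.X 0 + MvPowerSeries.X 1)}

/-- `R = k[[X,Y]]/(XY(X+Y))`. -/
abbrev R : Type := S ⧸ 𝔟

/-- The image `x` of `X` in `R`. -/
def x : R := Ideal.Quotient.mk 𝔟 (MvPowerSeries.X 0)
/-- The image `y` of `Y` in `R`. -/
def y : R := Ideal.Quotient.mk 𝔟 (MvPowerSeries.X 1)

theorem Finsupp.exists_eq_single_of_degree_eq_one {σ : Type*} {d : σ →₀ ℕ} (h : d.degree = 1) :
    ∃ i, d = Finsupp.single i 1 := by
  classical
  obtain ⟨i, hi⟩ := Multiset.card_eq_one.1 ((Finsupp.card_toMultiset d).trans h)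
  exact ⟨i, by rw [← Finsupp.toMultiset_toFinsupp d, hi, Multiset.toFinsupp_singleton]⟩

theorem Associated.map_of_pow_succ_eq_span_singleton_mul {A B : Type*} [CommRing A] [CommRing B]
    [IsDomain B] (φ : A →+* B) {I : Ideal A} {t : B} (ht : t ≠ 0)
    (hI : I.map φ = Ideal.span {t}) {a : A} {ℓ : ℕ}
    (h : I ^ (ℓ + 1) = Ideal.span {a} * I ^ ℓ) : Associated (φ a) t := by
  have hmap := congrArg (Ideal.map φ) h
  rw [Ideal.map_pow, Ideal.map_mul, Ideal.map_pow, hI, Ideal.map_span, Set.image_singleton,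
    Ideal.span_singleton_pow, Ideal.span_singleton_pow, Ideal.span_singleton_mul_span_singleton,
    Ideal.span_singleton_eq_span_singleton, pow_succ'] at hmap
  exact hmap.symm.of_mul_right (Associated.refl _) (pow_ne_zero _ ht)

namespace PowerSeries

variable {K : Type*}

theorem coeff_one_ne_zero_of_associated_X [CommRing K] [Nontrivial K] {f : PowerSeries K}
    (h : Associated f X) : coeff 1 f ≠ 0 := by
  obtain ⟨u, rfl⟩ := h.symm
  rw [coeff_succ_X_mul, coeff_zero_eq_constantCoeff_apply]
  exact (u.isUnit.map constantCoeff).ne_zero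

theorem span_C_mul_X_pair [Field K] {a b : K} (h : a ≠ 0 ∨ b ≠ 0) :
    Ideal.span {C a * X, C b * X} = Ideal.span {(X : PowerSeries K)} := by
  refine le_antisymm ?_ (Ideal.span_singleton_le_iff_mem _ |>.2 ?_)
  · rw [Ideal.span_le, Set.insert_subset_iff, Set.singleton_subset_iff]
    exact ⟨Ideal.mul_mem_left _ _ (Ideal.mem_span_singleton_self X),
      Ideal.mul_mem_left _ _ (Ideal.mem_span_singleton_self X)⟩
  · have hX {u : K} (hu : u ≠ 0) : X = C u⁻¹ * (C u * X) := by
      rw [← mul_assoc, ← map_mul, inv_mul_cancel₀ hu, map_one, one_mul]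
    rcases h with ha | hb
    · have hmem := Ideal.mul_mem_left (Ideal.span {C a * X, C b * X}) (C a⁻¹)
        (Ideal.subset_span (Set.mem_insert (C a * X) {C b * X}))
      rwa [← hX ha] at hmem
    · have hmem := Ideal.mul_mem_left (Ideal.span {C a * X, C b * X}) (C b⁻¹)
        (Ideal.subset_span (Set.mem_insert_of_mem (C a * X) (Set.mem_singleton (C b * X))))
      rwa [← hX hb] at hmem

theorem finsuppProd_C_mul_X_pow {σ : Type*} [CommRing K] (c : σ → K) (d : σ →₀ ℕ) :
    (d.prod fun s e ↦ (C (c s) * X : PowerSeries K) ^ e)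
      = C (d.prod fun s e ↦ c s ^ e) * X ^ d.degree := by
  simp only [Finsupp.prod, mul_pow, Finset.prod_mul_distrib, Finset.prod_pow_eq_pow_sum, map_prod,
    map_pow]
  rfl

end PowerSeries

namespace MvPowerSeries

section CommRing

variable {σ K : Type*} [CommRing K]

theorem hasSubst_C_mul_X [Finite σ] (c : σ → K) :
    HasSubst (fun i ↦ (PowerSeries.C (c i) * PowerSeries.X : PowerSeries K)) :=
  hasSubst_of_constantCoeff_zero fun _ ↦ by
    rw [map_mul]
    exact mul_eq_zero_of_right _ PowerSeries.constantCoeff_X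

def restrictToLine [Finite σ] (c : σ → K) : MvPowerSeries σ K →+* PowerSeries K :=
  (substAlgHom (hasSubst_C_mul_X c)).toRingHom

theorem restrictToLine_apply [Finite σ] (c : σ → K) (f : MvPowerSeries σ K) :
    restrictToLine c f = subst (fun i ↦ (PowerSeries.C (c i) * PowerSeries.X : PowerSeries K)) f :=
  congrFun (coe_substAlgHom _) f

theorem restrictToLine_X [Finite σ] (c : σ → K) (i : σ) :
    restrictToLine c (X i) = PowerSeries.C (c i) * PowerSeries.X := by
  rw [restrictToLine_apply, subst_X (hasSubst_C_mul_X c)]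

theorem coeff_one_restrictToLine [Fintype σ] (c : σ → K) (f : MvPowerSeries σ K) :
    PowerSeries.coeff 1 (restrictToLine c f) = ∑ i, c i * coeff (Finsupp.single i 1) f := by
  classical
  rw [restrictToLine_apply, PowerSeries.coeff, coeff_subst (hasSubst_C_mul_X c)]
  simp only [PowerSeries.finsuppProd_C_mul_X_pow, ← PowerSeries.coeff_def rfl,
    PowerSeries.coeff_C_mul_X_pow]
  rw [finsum_eq_sum_of_support_subset (s := Finset.univ.image fun i ↦ Finsupp.single i 1),
    Finset.sum_image fun i _ j _ h ↦ Finsupp.single_left_injective one_ne_zero h]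
  · refine Finset.sum_congr rfl fun i _ ↦ ?_
    simp [Finsupp.prod_single_index, Finsupp.degree_single, mul_comm]
  · intro d hd
    have hdeg : d.degree = 1 := by
      by_contra h
      simp [Ne.symm h] at hd
    obtain ⟨i, rfl⟩ := Finsupp.exists_eq_single_of_degree_eq_one hdeg
    simp

theorem restrictToLine_X_mul_X_mul_X_add_X (c : Fin 2 → K) :
    restrictToLine c (X 0 * X 1 * (X 0 + X 1))
      = PowerSeries.C (c 0 * c 1 * (c 0 + c 1)) * PowerSeries.X ^ 3 := by
  simp only [map_mul, map_add, restrictToLine_X]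
  ring

end CommRing

theorem coeff_one_restrictToLine_ne_zero {K : Type*} [Field K]
    {𝔞 : Ideal (MvPowerSeries (Fin 2) K)}
    {c : Fin 2 → K} (hc : c ≠ 0) (h𝔞 : 𝔞 ≤ RingHom.ker (restrictToLine c))
    {a : MvPowerSeries (Fin 2) K} {ℓ : ℕ}
    (h : Ideal.span {Ideal.Quotient.mk 𝔞 (X 0), Ideal.Quotient.mk 𝔞 (X 1)} ^ (ℓ + 1)
      = Ideal.span {Ideal.Quotient.mk 𝔞 a}
        * Ideal.span {Ideal.Quotient.mk 𝔞 (X 0), Ideal.Quotient.mk 𝔞 (X 1)} ^ ℓ) :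
    PowerSeries.coeff 1 (restrictToLine c a) ≠ 0 := by
  let φ := Ideal.Quotient.lift 𝔞 (restrictToLine c) h𝔞
  have hφ (f : MvPowerSeries (Fin 2) K) : φ (Ideal.Quotient.mk 𝔞 f) = restrictToLine c f :=
    Ideal.Quotient.lift_mk _ _ _
  have hc' : c 0 ≠ 0 ∨ c 1 ≠ 0 := by
    contrapose! hc
    ext i
    fin_cases i <;> simp [hc]
  have hm : (Ideal.span {Ideal.Quotient.mk 𝔞 (X 0), Ideal.Quotient.mk 𝔞 (X 1)}).map φ
      = Ideal.span {PowerSeries.X} := by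
    rw [Ideal.map_span, Set.image_pair, hφ, hφ, restrictToLine_X, restrictToLine_X,
      PowerSeries.span_C_mul_X_pair hc']
  exact PowerSeries.coeff_one_ne_zero_of_associated_X
    (Associated.map_of_pow_succ_eq_span_singleton_mul φ PowerSeries.X_ne_zero hm h)

end MvPowerSeries

open MvPowerSeries

/-- In `R = k[[X,Y]]/(XY(X+Y))` with `k = ℤ/2ℤ` and `𝔪 = (x,y)`, no element `a ∈ R` gives an
almost reduction `(a)` of `𝔪`: there is no `a` with `a^ℓ ∈ 𝔪^ℓ` and `𝔪^(ℓ+1) = a·𝔪^ℓ`. -/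
theorem maximal_ideal_has_no_almost_reduction :
    ¬ ∃ a : R, IsAlmostReduction (Ideal.span {a}) (Ideal.span {x, y}) := by
  rintro ⟨a, ℓ, -, h⟩
  obtain ⟨a, rfl⟩ := Ideal.Quotient.mk_surjective a
  have hcurve (c : Fin 2 → ZMod 2) : 𝔟 ≤ RingHom.ker (restrictToLine c) := by
    rw [𝔟, Ideal.span_le, Set.singleton_subset_iff, SetLike.mem_coe, RingHom.mem_ker,
      restrictToLine_X_mul_X_mul_X_add_X,
      (by decide : ∀ u v : ZMod 2, u * v * (u + v) = 0), map_zero, zero_mul]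
  obtain ⟨c, hc, hlin⟩ := (by decide : ∀ u v : ZMod 2,
      ∃ c : Fin 2 → ZMod 2, c ≠ 0 ∧ c 0 * u + c 1 * v = 0)
    (coeff (Finsupp.single 0 1) a) (coeff (Finsupp.single 1 1) a)
  apply coeff_one_restrictToLine_ne_zero hc (hcurve c) h
  rwa [coeff_one_restrictToLine, Fin.sum_univ_two]
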